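/- arXiv:1107.1489 — 5 statements merged into one kernel-verified Lean document; each statement's English description precedes it below -/
import Mathlib

section
/- Every group G has a torsion-free universal quotient: there exists a normal subgroup N of G such that the quotient G/N is torsion-free, and for every torsion-free group K and every homomorphism f : G → K, one has N ≤ ker f (so f factors through the quotient map G → G/N). -/
/-- A monoid is torsion-free if no nontrivial element has finite order
(the definition of `Monoid.IsTorsionFree` in the older Mathlib). -/
def Monoid.IsTorsionFree (G : Type*) [Monoid G] : Prop :=
  ∀ g : G, g ≠ 1 → ¬IsOfFinOrder g

/-!
`G ⧸ H` is torsion-free exactly when `H` contains every element some positive power of which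
lies in `H`. This property is stable under intersections and holds for the kernel of any map
to a torsion-free group, so the intersection of all normal subgroups having it is the
required universal `N`.
-/

theorem Monoid.IsTorsionFree.eq_one_of_pow_eq_one {K : Type*} [Monoid K]
    (hK : Monoid.IsTorsionFree K) {x : K} {n : ℕ} (hn : 0 < n) (hx : x ^ n = 1) : x = 1 := by
  by_contra hx1
  exact hK x hx1 (isOfFinOrder_iff_pow_eq_one.mpr ⟨n, hn, hx⟩)

namespace Subgroup

variable {G : Type*} [Group G]

def IsRootClosed (H : Subgroup G) : Prop :=
  ∀ (g : G) (n : ℕ), 0 < n → g ^ n ∈ H → g ∈ H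

theorem isTorsionFree_quotient_iff_isRootClosed (H : Subgroup G) [H.Normal] :
    Monoid.IsTorsionFree (G ⧸ H) ↔ H.IsRootClosed := by
  simp only [Monoid.IsTorsionFree, IsRootClosed, isOfFinOrder_iff_pow_eq_one,
    QuotientGroup.mk_surjective.forall, ← QuotientGroup.mk_pow, ne_eq,
    QuotientGroup.eq_one_iff]
  grind

theorem isRootClosed_iInf {ι : Sort*} {H : ι → Subgroup G} (hH : ∀ i, (H i).IsRootClosed) :
    (⨅ i, H i).IsRootClosed := by
  intro g n hn hg
  simp only [mem_iInf] at hg ⊢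
  exact fun i => hH i g n hn (hg i)

end Subgroup

theorem MonoidHom.isRootClosed_ker {G K : Type*} [Group G] [Group K]
    (hK : Monoid.IsTorsionFree K) (f : G →* K) : f.ker.IsRootClosed := by
  intro g n hn hg
  rw [mem_ker, map_pow] at hg
  exact hK.eq_one_of_pow_eq_one hn hg

/-- Every group has a torsion-free universal quotient: there is a normal subgroup `N`
of `G` such that `G ⧸ N` is torsion-free and every homomorphism from `G` to a
torsion-free group kills `N`. -/
theorem exists_torsionFree_universal_quotient (G : Type) [Group G] :
    ∃ (N : Subgroup G) (hN : N.Normal),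
      letI := hN
      Monoid.IsTorsionFree (G ⧸ N) ∧
        ∀ (K : Type) [Group K], Monoid.IsTorsionFree K →
          ∀ f : G →* K, N ≤ f.ker := by
  let N := ⨅ H : {H : Subgroup G // H.Normal ∧ H.IsRootClosed}, H.1
  have hN : N.Normal := Subgroup.normal_iInf_normal fun H => H.2.1
  refine ⟨N, hN, ?_, fun K _ hK f => ?_⟩
  · exact (Subgroup.isTorsionFree_quotient_iff_isRootClosed N).mpr
      (Subgroup.isRootClosed_iInf fun H => H.2.2)
  · exact iInf_le (fun H : {H : Subgroup G // H.Normal ∧ H.IsRootClosed} => H.1)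
      ⟨f.ker, f.normal_ker, f.isRootClosed_ker hK⟩
end

section
/- Let G be the presented group on three generators x, y, z with relators x², y³, and x·y·z⁻⁶ (i.e. G = PresentedGroup R where R = {(of 0)², (of 1)³, of 0 · of 1 · (of 2)⁻⁶} ⊆ FreeGroup (Fin 3)). Then the quotient of G by the normal closure of the set of its torsion elements is NOT torsion-free: the quotient G/⟪{g : G | IsOfFinOrder g}⟫ contains a nontrivial element of finite order. -/
/-!
`G` maps to the amalgamated product `(C₂ ∗ C₃) ∗_ℤ ℤ` in which the infinite-order element `ab` of
`C₂ ∗ C₃` is identified with `6 ∈ ℤ`, via `x ↦ a`, `y ↦ b`, `z ↦ 1`. In an amalgamated product every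
element of finite order is conjugate into a factor, since a cyclically reduced word of length at
least two has reduced powers. Hence the character of the amalgam that is trivial on `C₂ ∗ C₃` and
reduces `ℤ` modulo `6` kills every torsion element of `G` but not `z`. So `z` is nontrivial in the
quotient, while `z⁶ = xy` is trivial there.
-/

/-- The relators `x²`, `y³`, `x·y·z⁻⁶` on three generators. -/
def chiVyaRels : Set (FreeGroup (Fin 3)) :=
  {FreeGroup.of 0 ^ 2, FreeGroup.of 1 ^ 3,
    FreeGroup.of 0 * FreeGroup.of 1 * (FreeGroup.of 2) ^ (-6 : ℤ)}

namespace Monoid.PushoutI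

open CoprodI

variable {ι : Type*} {G : ι → Type*} [∀ i, Group (G i)] {H : Type*} [Group H]
  {φ : ∀ i, H →* G i}

variable (φ) in
def listProd (l : List (Σ i, G i)) : PushoutI φ :=
  (l.map fun p => of p.1 p.2).prod

@[simp]
theorem listProd_nil : listProd φ [] = 1 := rfl

@[simp]
theorem listProd_cons (p : Σ i, G i) (l : List (Σ i, G i)) :
    listProd φ (p :: l) = of p.1 p.2 * listProd φ l := by
  simp [listProd]

@[simp]
theorem listProd_append (l₁ l₂ : List (Σ i, G i)) :
    listProd φ (l₁ ++ l₂) = listProd φ l₁ * listProd φ l₂ := by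
  simp [listProd]

theorem listProd_flatten_replicate (n : ℕ) (l : List (Σ i, G i)) :
    listProd φ (List.replicate n l).flatten = listProd φ l ^ n := by
  induction n with
  | zero => simp
  | succ n ih => rw [List.replicate_succ, List.flatten_cons, listProd_append, ih, pow_succ']

variable (φ) in
def IsReducedList (l : List (Σ i, G i)) : Prop :=
  l.IsChain (fun p q => p.1 ≠ q.1) ∧ ∀ p ∈ l, p.2 ∉ (φ p.1).range

theorem IsReducedList.left_of_append {l₁ l₂ : List (Σ i, G i)}
    (hl : IsReducedList φ (l₁ ++ l₂)) : IsReducedList φ l₁ :=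
  ⟨hl.1.left_of_append, fun p hp => hl.2 p (List.mem_append_left _ hp)⟩

theorem IsReducedList.right_of_append {l₁ l₂ : List (Σ i, G i)}
    (hl : IsReducedList φ (l₁ ++ l₂)) : IsReducedList φ l₂ :=
  ⟨hl.1.right_of_append, fun p hp => hl.2 p (List.mem_append_right _ hp)⟩

theorem IsReducedList.replace {l₁ l₂ : List (Σ i, G i)} {i : ι} {x y : G i}
    (hl : IsReducedList φ (l₁ ++ ⟨i, x⟩ :: l₂)) (hy : y ∉ (φ i).range) :
    IsReducedList φ (l₁ ++ ⟨i, y⟩ :: l₂) := by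
  have hchain : ∀ l : List (Σ i, G i),
      l.IsChain (fun p q => p.1 ≠ q.1) ↔ (l.map Sigma.fst).IsChain (· ≠ ·) := by
    simp [List.isChain_map]
  refine ⟨?_, ?_⟩
  · simpa [hchain] using hl.1
  · simp only [List.mem_append, List.mem_cons]
    rintro p (hp | rfl | hp)
    · exact hl.2 p (by simp [hp])
    · exact hy
    · exact hl.2 p (by simp [hp])

theorem IsReducedList.listProd_notMem_range (hφ : ∀ i, Function.Injective (φ i))
    {l : List (Σ i, G i)} (hl : IsReducedList φ l) (hne : l ≠ []) :
    listProd φ l ∉ (base φ).range := by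
  intro hmem
  let w : Word G := ⟨l, fun p hp h1 => hl.2 p hp (h1 ▸ one_mem _), hl.1⟩
  have hw : Reduced φ w := hl.2
  have hprod : ofCoprodI w.prod = listProd φ l := by
    simp [w, Word.prod, listProd, map_list_prod, List.map_map, Function.comp_def]
  exact hne (congrArg Word.toList (hw.eq_empty_of_mem_range hφ (hprod ▸ hmem)))

-- `hcyc` says that `l` is cyclically reduced (which forces `2 ≤ l.length`), so the
-- concatenation of `n` copies of `l` is again reduced.
theorem IsReducedList.listProd_pow_ne_one (hφ : ∀ i, Function.Injective (φ i))
    {l : List (Σ i, G i)} (hl : IsReducedList φ l)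
    (hcyc : l.head?.map Sigma.fst ≠ l.getLast?.map Sigma.fst) {n : ℕ} (hn : n ≠ 0) :
    listProd φ l ^ n ≠ 1 := by
  have hne : l ≠ [] := by rintro rfl; exact hcyc rfl
  have hcyc' : ∀ p ∈ l.getLast?, ∀ q ∈ l.head?, p.1 ≠ q.1 := by
    intro p hp q hq hpq
    simp_all [Option.mem_def]
  have hred : IsReducedList φ (List.replicate n l).flatten := by
    refine ⟨(List.isChain_flatten (by simp [hne.symm])).2 ⟨?_, ?_⟩, ?_⟩
    · intro l' hl'
      rw [List.eq_of_mem_replicate hl']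
      exact hl.1
    · exact List.isChain_replicate_of_rel n hcyc'
    · intro p hp
      obtain ⟨l', hl', hp⟩ := List.mem_flatten.1 hp
      exact hl.2 p (List.eq_of_mem_replicate hl' ▸ hp)
  intro h1
  apply hred.listProd_notMem_range hφ (by simp [hn, hne])
  rw [listProd_flatten_replicate, h1]
  exact one_mem _

theorem exists_eq_base_or_isReducedList (hφ : ∀ i, Function.Injective (φ i))
    (g : PushoutI φ) :
    (∃ h, base φ h = g) ∨ ∃ l ≠ [], IsReducedList φ l ∧ listProd φ l = g := by
  classical
  obtain ⟨d⟩ := NormalWord.transversal_nonempty φ hφ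
  set w : NormalWord d := g • NormalWord.empty
  have hg : base φ w.head * listProd φ w.toList = g := by
    simpa [NormalWord.prod, Word.prod, listProd, map_list_prod, List.map_map,
      Function.comp_def] using NormalWord.prod_smul g (NormalWord.empty (d := d))
  have hred : IsReducedList φ w.toList := by
    refine ⟨w.chain_ne, fun ⟨i, x⟩ hx hrange => w.ne_one _ hx ?_⟩
    -- `x` lies in the transversal `d.set i`, which meets `(φ i).range` only in `1`
    have hxT : x ∈ d.set i := w.normalized i x hx
    have := (d.compl i).1 (a₁ := (⟨x, hrange⟩, ⟨1, d.one_mem i⟩))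
      (a₂ := (⟨1, one_mem _⟩, ⟨x, hxT⟩)) (by simp)
    exact congrArg (fun p => (p.1 : G i)) this
  revert hg hred
  rcases w.toList with _ | ⟨⟨i, x⟩, t⟩
  · exact fun hg _ => Or.inl ⟨w.head, by simpa using hg⟩
  · intro hg hred
    refine Or.inr ⟨⟨i, φ i w.head * x⟩ :: t, List.cons_ne_nil _ _,
      hred.replace (l₁ := []) ?_, ?_⟩
    · rw [Subgroup.mul_mem_cancel_left _ (MonoidHom.mem_range.2 ⟨w.head, rfl⟩)]
      exact hred.2 _ List.mem_cons_self
    · rw [← hg, listProd_cons, listProd_cons, map_mul, of_apply_eq_base, mul_assoc]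

theorem IsReducedList.exists_isConj_shorter {i : ι} {a c : G i} {m : List (Σ i, G i)}
    (hl : IsReducedList φ (⟨i, a⟩ :: (m ++ [⟨i, c⟩]))) :
    ∃ l ≠ [], IsReducedList φ l ∧ l.length ≤ m.length + 1 ∧
      IsConj (listProd φ l) (listProd φ (⟨i, a⟩ :: (m ++ [⟨i, c⟩]))) := by
  have hm : IsReducedList φ (m ++ [⟨i, c⟩]) := hl.right_of_append (l₁ := [_])
  have hconj : IsConj (listProd φ m * of i (c * a))
      (listProd φ (⟨i, a⟩ :: (m ++ [⟨i, c⟩]))) :=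
    isConj_iff.2 ⟨of i a, by
      simp only [listProd_cons, listProd_append, listProd_nil, map_mul]
      group⟩
  by_cases hca : c * a ∈ (φ i).range
  · obtain ⟨h, hh⟩ := hca
    -- the last letter of `m` absorbs `φ i h`; it exists because `i` cannot follow `i`
    obtain rfl | ⟨m', ⟨j, e⟩, rfl⟩ := List.eq_nil_or_concat' m
    · simpa using hl.1
    refine ⟨m' ++ [⟨j, e * φ j h⟩], by simp, ?_, by simp, ?_⟩
    · refine (hm.left_of_append).replace (l₂ := []) ?_
      rw [Subgroup.mul_mem_cancel_right _ (MonoidHom.mem_range.2 ⟨h, rfl⟩)]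
      exact hm.2 ⟨j, e⟩ (by simp)
    · convert hconj using 1
      simp [← hh, of_apply_eq_base, mul_assoc]
  · exact ⟨m ++ [⟨i, c * a⟩], by simp, hm.replace (l₂ := []) hca, by simp,
      by simpa using hconj⟩

theorem IsReducedList.exists_isConj_of_isOfFinOrder (hφ : ∀ i, Function.Injective (φ i)) :
    ∀ {l : List (Σ i, G i)}, IsReducedList φ l → l ≠ [] → IsOfFinOrder (listProd φ l) →
      ∃ i, ∃ x : G i, IsConj (of i x) (listProd φ l)
  | [], _, hne, _ => absurd rfl hne
  | [⟨i, x⟩], _, _, _ => ⟨i, x, by simpa using IsConj.refl (of (φ := φ) i x)⟩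
  | ⟨i, a⟩ :: q :: r, hl, _, hfin => by
    obtain ⟨m, ⟨j, c⟩, hmc⟩ := (List.eq_nil_or_concat' (q :: r)).resolve_left (by simp)
    rw [hmc] at hl hfin ⊢
    obtain rfl | hij := eq_or_ne i j
    · obtain ⟨l', hne', hl', hlen, hconj⟩ := hl.exists_isConj_shorter
      have : l'.length < r.length + 2 := by
        have := congrArg List.length hmc
        simp at this
        omega
      obtain ⟨k, x, hx⟩ :=
        hl'.exists_isConj_of_isOfFinOrder hφ hne' (hconj.symm.isOfFinOrder hfin)
      exact ⟨k, x, hx.trans hconj⟩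
    · obtain ⟨n, hn, hpow⟩ := hfin.exists_pow_eq_one
      exact absurd hpow (hl.listProd_pow_ne_one hφ
        (by rw [← List.cons_append, List.getLast?_concat]; simp [hij]) hn.ne')
termination_by l => l.length

theorem exists_isConj_of_isOfFinOrder [Nonempty ι] (hφ : ∀ i, Function.Injective (φ i))
    {g : PushoutI φ} (hg : IsOfFinOrder g) : ∃ i, ∃ x : G i, IsConj (of i x) g := by
  obtain ⟨h, rfl⟩ | ⟨l, hne, hl, rfl⟩ := exists_eq_base_or_isReducedList hφ g
  · obtain ⟨i⟩ := ‹Nonempty ι›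
    exact ⟨i, φ i h, by rw [of_apply_eq_base]⟩
  · exact hl.exists_isConj_of_isOfFinOrder hφ hne hg

theorem map_eq_one_of_isOfFinOrder [Nonempty ι] (hφ : ∀ i, Function.Injective (φ i))
    {K : Type*} [Monoid K] (f : PushoutI φ →* K)
    (hf : ∀ i (x : G i), IsOfFinOrder x → f (of i x) = 1) {g : PushoutI φ}
    (hg : IsOfFinOrder g) : f g = 1 := by
  obtain ⟨i, x, hconj⟩ := exists_isConj_of_isOfFinOrder hφ hg
  have hx : IsOfFinOrder x :=
    (of_injective hφ i).isOfFinOrder_iff.1 (hconj.symm.isOfFinOrder hg)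
  have := f.map_isConj hconj
  rwa [hf i x hx, isConj_one_right] at this

end Monoid.PushoutI

theorem zpowersHom_injective {G : Type*} [Group G] {g : G} (hg : ¬IsOfFinOrder g) :
    Function.Injective (zpowersHom G g) :=
  (injective_zpow_iff_not_isOfFinOrder.2 hg).comp Multiplicative.toAdd.injective

namespace ChiVya

open Monoid PushoutI Multiplicative

abbrev trivialBase (i : Fin 2) : Unit →* Multiplicative (ZMod (![2, 3] i)) := 1

-- `C₂ ∗ C₃` as an amalgamated product over the trivial group, so that the results on reduced
-- lists apply to it.
abbrev FreeProd : Type := PushoutI trivialBase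

def a : FreeProd := of 0 (ofAdd 1)

def b : FreeProd := of 1 (ofAdd 1)

theorem a_sq : a ^ 2 = 1 := by
  rw [a, ← map_pow]
  exact (congrArg (of 0) (by decide : ofAdd (1 : ZMod 2) ^ 2 = 1)).trans (map_one _)

theorem b_cube : b ^ 3 = 1 := by
  rw [b, ← map_pow]
  exact (congrArg (of 1) (by decide : ofAdd (1 : ZMod 3) ^ 3 = 1)).trans (map_one _)

theorem not_isOfFinOrder_a_mul_b : ¬IsOfFinOrder (a * b) := by
  have hred : IsReducedList trivialBase [⟨0, ofAdd 1⟩, ⟨1, ofAdd 1⟩] :=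
    ⟨by simp, by
      simpa using ⟨(by decide : ofAdd (1 : ZMod 2) ≠ 1), (by decide : ofAdd (1 : ZMod 3) ≠ 1)⟩⟩
  rw [isOfFinOrder_iff_pow_eq_one]
  rintro ⟨n, hn, hpow⟩
  exact hred.listProd_pow_ne_one (fun _ _ _ _ => rfl) (by simp) hn.ne'
    (by simpa [a, b] using hpow)

abbrev Factor : Bool → Type
  | false => FreeProd
  | true => Multiplicative ℤ

instance : ∀ t, Group (Factor t)
  | false => inferInstanceAs (Group FreeProd)
  | true => inferInstanceAs (Group (Multiplicative ℤ))

def emb : ∀ t, Multiplicative ℤ →* Factor t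
  | false => zpowersHom FreeProd (a * b)
  | true => zpowersHom (Multiplicative ℤ) (ofAdd 6)

theorem emb_injective : ∀ t, Function.Injective (emb t)
  | false => zpowersHom_injective not_isOfFinOrder_a_mul_b
  | true => zpowersHom_injective (not_isOfFinOrder_of_isMulTorsionFree (by decide))

abbrev Amalgam : Type := PushoutI emb

theorem of_a_mul_b : (of false (a * b) : Amalgam) = of true (ofAdd 1) ^ 6 := by
  have h₁ : (a * b : Factor false) = emb false (ofAdd 1) := (pow_one _).symm
  have h₆ : (ofAdd 1 : Factor true) ^ 6 = emb true (ofAdd 1) := by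
    show ofAdd (6 • 1 : ℤ) = ofAdd (1 • 6 : ℤ)
    rfl
  rw [h₁, ← map_pow, h₆, of_apply_eq_base, of_apply_eq_base]

def toZMod6Factor : ∀ t, Factor t →* Multiplicative (ZMod 6)
  | false => 1
  | true => (Int.castAddHom (ZMod 6)).toMultiplicative

def toZMod6 : Amalgam →* Multiplicative (ZMod 6) :=
  lift toZMod6Factor 1 fun
    | false => rfl
    | true => by ext; decide

theorem toZMod6_of_true (n : Multiplicative ℤ) :
    toZMod6 (of true n) = ofAdd ((toAdd n : ℤ) : ZMod 6) :=
  lift_of ..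

theorem toZMod6_eq_one_of_isOfFinOrder {g : Amalgam} (hg : IsOfFinOrder g) : toZMod6 g = 1 :=
  map_eq_one_of_isOfFinOrder emb_injective toZMod6 (fun
    | false, _, _ => rfl
    | true, x, hx => by rw [hx.eq_one', map_one, map_one]) hg

theorem of_pow_eq_one {n : ℕ} {i : Fin 3} (h : FreeGroup.of i ^ n ∈ chiVyaRels) :
    (PresentedGroup.of i : PresentedGroup chiVyaRels) ^ n = 1 :=
  (map_pow _ _ _).symm.trans (PresentedGroup.one_of_mem h)

theorem of_two_pow_six :
    (PresentedGroup.of 2 : PresentedGroup chiVyaRels) ^ 6 =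
      PresentedGroup.of 0 * PresentedGroup.of 1 := by
  have := PresentedGroup.one_of_mem (rels := chiVyaRels)
    (x := FreeGroup.of 0 * FreeGroup.of 1 * FreeGroup.of 2 ^ (-6 : ℤ)) (by simp [chiVyaRels])
  rw [map_mul, map_mul, map_zpow, zpow_neg, mul_inv_eq_one] at this
  exact_mod_cast this.symm

def toAmalgam : PresentedGroup chiVyaRels →* Amalgam :=
  PresentedGroup.toGroup (f := ![of false a, of false b, of true (ofAdd 1)]) <| by
    rintro r (rfl | rfl | rfl) <;>
      simp only [map_mul, map_pow, map_zpow, FreeGroup.lift_apply_of, Matrix.cons_val]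
    · rw [← map_pow, a_sq, map_one]
    · rw [← map_pow, b_cube, map_one]
    · rw [← map_mul, of_a_mul_b, zpow_neg, zpow_ofNat, mul_inv_cancel]

theorem toZMod6_toAmalgam_of_two : toZMod6 (toAmalgam (PresentedGroup.of 2)) = ofAdd 1 := by
  rw [toAmalgam, PresentedGroup.toGroup.of]
  exact toZMod6_of_true _

end ChiVya

open ChiVya in
/-- For `G = ⟨x,y,z | x², y³, x·y·z⁻⁶⟩`, the quotient of `G` by the normal closure of its
set of torsion elements is not torsion-free: it has a nontrivial element of finite order. -/
theorem quotient_by_torsion_not_torsionFree :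
    ∃ x : PresentedGroup chiVyaRels ⧸
        Subgroup.normalClosure {g : PresentedGroup chiVyaRels | IsOfFinOrder g},
      x ≠ 1 ∧ IsOfFinOrder x := by
  set N := Subgroup.normalClosure {g : PresentedGroup chiVyaRels | IsOfFinOrder g}
  have hN : N ≤ (toZMod6.comp toAmalgam).ker := Subgroup.normalClosure_le_normal fun g hg =>
    toZMod6_eq_one_of_isOfFinOrder (toAmalgam.isOfFinOrder hg)
  have hmk : ∀ {i : Fin 3} {n : ℕ}, FreeGroup.of i ^ n ∈ chiVyaRels → 0 < n →
      (QuotientGroup.mk (PresentedGroup.of i) : PresentedGroup chiVyaRels ⧸ N) = 1 :=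
    fun h hn => (QuotientGroup.eq_one_iff _).2 <| Subgroup.subset_normalClosure <|
      isOfFinOrder_iff_pow_eq_one.2 ⟨_, hn, of_pow_eq_one h⟩
  refine ⟨QuotientGroup.mk (PresentedGroup.of 2), fun h => ?_, ?_⟩
  · have := hN ((QuotientGroup.eq_one_iff _).1 h)
    rw [MonoidHom.mem_ker, MonoidHom.comp_apply, toZMod6_toAmalgam_of_two] at this
    exact absurd this (by decide)
  · refine isOfFinOrder_iff_pow_eq_one.2 ⟨6, by norm_num, ?_⟩
    rw [← QuotientGroup.mk_pow, of_two_pow_six, QuotientGroup.mk_mul,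
      hmk (n := 2) (by simp [chiVyaRels]) two_pos, hmk (n := 3) (by simp [chiVyaRels]) three_pos,
      mul_one]
end

section
/- Let a = FreeGroup.of 0 and b = FreeGroup.of 1 in the free group FreeGroup (Fin 2) on two generators. The group homomorphism from the free group FreeGroup ℕ on countably many generators to FreeGroup (Fin 2) determined by sending the i-th generator to b⁻ⁱ · a · bⁱ (i.e. FreeGroup.lift (fun i : ℕ => (b⁻¹)^i * a * b^i)) is injective. In particular, the free group of countable rank embeds in the free group of rank 2, so F₂ is a universal free group. -/
open FreeGroup List

private lemma fg_cons_no_cancel {α : Type*} [DecidableEq α] (x : α × Bool) (w : FreeGroup α)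
    (h : ∀ y, w.toWord.head? = some y → x.1 ≠ y.1 ∨ x.2 ≠ !y.2) :
    (FreeGroup.mk [x] * w).toWord = x :: w.toWord := by
  conv_lhs => rw [← FreeGroup.mk_toWord (x := w), FreeGroup.mul_mk]
  rw [show [x] ++ w.toWord = x :: w.toWord from rfl, FreeGroup.toWord_mk, FreeGroup.reduce.cons,
    FreeGroup.reduce_toWord]
  cases hw : w.toWord with
  | nil => rfl
  | cons y t =>
    have := h y (by rw [hw]; rfl)
    simp only []
    rw [if_neg]
    rintro ⟨h1, h2⟩
    rcases this with h' | h' <;> exact h' ‹_›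

private lemma fg_tail_reduced {α : Type*} [DecidableEq α] {y : α × Bool} {t : List (α × Bool)}
    (w : FreeGroup α) (h : w.toWord = y :: t) : FreeGroup.reduce t = t := by
  have hr : FreeGroup.reduce (y :: t) = y :: t := by rw [← h, FreeGroup.reduce_toWord]
  rw [FreeGroup.reduce.cons] at hr
  have hlen : (FreeGroup.reduce t).length ≤ t.length :=
    (FreeGroup.Red.sublist (FreeGroup.reduce.red)).length_le
  cases hrt : FreeGroup.reduce t with
  | nil =>
    rw [hrt] at hr
    simp only [] at hr
    have ht0 : t = [] := by
      have := congrArg List.length hr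
      simpa using this.symm
    subst ht0
    rfl
  | cons hd tl =>
    rw [hrt] at hr
    simp only [] at hr
    split_ifs at hr with hcond
    · exfalso
      have h1 : tl.length + 1 ≤ t.length := by rw [hrt] at hlen; simpa using hlen
      have h2 : tl.length = t.length + 1 := by rw [hr]; simp
      omega
    · have ht : hd :: tl = t := by injection hr
      exact ht

private lemma fg_cons_cancel {α : Type*} [DecidableEq α] (x : α) (b : Bool) (w : FreeGroup α)
    {t : List (α × Bool)} (h : w.toWord = (x, !b) :: t) :
    (FreeGroup.mk [(x, b)] * w).toWord = t := by
  have hw : w = (FreeGroup.mk [(x, b)])⁻¹ * FreeGroup.mk t := by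
    rw [FreeGroup.inv_mk]
    have h2 : FreeGroup.invRev [(x, b)] = [(x, !b)] := rfl
    rw [h2, FreeGroup.mul_mk, ← FreeGroup.mk_toWord (x := w), h]
    rfl
  rw [hw, mul_inv_cancel_left, FreeGroup.toWord_mk, fg_tail_reduced w h]

private lemma fg_key (i : ℕ) (bb : Bool) :
    ∀ w : FreeGroup (Fin 2),
      ¬ (List.replicate i ((1 : Fin 2), false) ++ [((0 : Fin 2), !bb)]) <+: w.toWord →
      ∃ t, (((FreeGroup.of (1 : Fin 2))⁻¹) ^ i * FreeGroup.mk [((0 : Fin 2), bb)] *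
          (FreeGroup.of (1 : Fin 2)) ^ i * w).toWord
        = List.replicate i ((1 : Fin 2), false) ++ ((0 : Fin 2), bb) :: t := by
  induction i with
  | zero =>
    intro w h
    simp only [pow_zero, one_mul, mul_one, List.replicate_zero, List.nil_append] at h ⊢
    refine ⟨w.toWord, ?_⟩
    apply fg_cons_no_cancel
    rintro ⟨y1, y2⟩ hy
    by_contra hc
    push_neg at hc
    obtain ⟨h1, h2⟩ := hc
    simp only at h1 h2
    apply h
    cases hw : w.toWord with
    | nil => rw [hw] at hy; simp at hy
    | cons z zs =>
      rw [hw] at hy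
      simp only [List.head?_cons, Option.some.injEq] at hy
      subst hy
      rw [← h1, h2, Bool.not_not]
      exact ⟨zs, rfl⟩
  | succ i ih =>
    intro w h
    have hgrp : ((FreeGroup.of (1 : Fin 2))⁻¹) ^ (i + 1) * FreeGroup.mk [((0 : Fin 2), bb)] *
        (FreeGroup.of (1 : Fin 2)) ^ (i + 1) * w
        = FreeGroup.mk [((1 : Fin 2), false)] *
          (((FreeGroup.of (1 : Fin 2))⁻¹) ^ i * FreeGroup.mk [((0 : Fin 2), bb)] *
            (FreeGroup.of (1 : Fin 2)) ^ i * (FreeGroup.mk [((1 : Fin 2), true)] * w)) := by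
      have hbinv : (FreeGroup.of (1 : Fin 2))⁻¹ = FreeGroup.mk [((1 : Fin 2), false)] := rfl
      have hb : FreeGroup.of (1 : Fin 2) = FreeGroup.mk [((1 : Fin 2), true)] := rfl
      rw [pow_succ', pow_succ, ← hbinv, ← hb]
      simp [mul_assoc]
    by_cases hw : w.toWord.head? = some ((1 : Fin 2), false)
    · -- cancellation case
      obtain ⟨t₀, ht₀⟩ : ∃ t₀, w.toWord = ((1 : Fin 2), false) :: t₀ := by
        cases hww : w.toWord with
        | nil => rw [hww] at hw; simp at hw
        | cons z zs =>
          rw [hww] at hw; simp only [List.head?_cons, Option.some.injEq] at hw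
          exact ⟨zs, by rw [hw]⟩
      have hv : (FreeGroup.mk [((1 : Fin 2), true)] * w).toWord = t₀ :=
        fg_cons_cancel 1 true w ht₀
      have hpre : ¬ (List.replicate i ((1 : Fin 2), false) ++ [((0 : Fin 2), !bb)]) <+:
          (FreeGroup.mk [((1 : Fin 2), true)] * w).toWord := by
        rw [hv]
        intro hp
        apply h
        rw [ht₀, List.replicate_succ, List.cons_append]
        exact List.cons_prefix_cons.mpr ⟨rfl, hp⟩
      obtain ⟨t, ht⟩ := ih _ hpre
      refine ⟨t, ?_⟩
      rw [hgrp]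
      rw [fg_cons_no_cancel _ _ ?_]
      · rw [ht, List.replicate_succ, List.cons_append]
      · intro y hy
        rw [ht] at hy
        cases i with
        | zero =>
          simp only [List.replicate_zero, List.nil_append, List.head?_cons,
            Option.some.injEq] at hy
          subst hy
          left; exact (by decide : (1 : Fin 2) ≠ 0)
        | succ n =>
          rw [List.replicate_succ, List.cons_append, List.head?_cons] at hy
          simp only [Option.some.injEq] at hy
          subst hy
          right; exact (by decide : false ≠ !false)
    · -- no cancellation case
      have hv : (FreeGroup.mk [((1 : Fin 2), true)] * w).toWord = ((1 : Fin 2), true) :: w.toWord := by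
        apply fg_cons_no_cancel
        rintro ⟨y1, y2⟩ hy
        by_contra hc
        push_neg at hc
        obtain ⟨h1, h2⟩ := hc
        simp only at h1 h2
        apply hw
        rw [hy, ← h1]
        cases y2 with
        | false => rfl
        | true => simp at h2
      have hpre : ¬ (List.replicate i ((1 : Fin 2), false) ++ [((0 : Fin 2), !bb)]) <+:
          (FreeGroup.mk [((1 : Fin 2), true)] * w).toWord := by
        rw [hv]
        intro hp
        cases i with
        | zero =>
          simp only [List.replicate_zero, List.nil_append] at hp
          have := (List.cons_prefix_cons.mp hp).1
          have h0 : (0 : Fin 2) = 1 := congrArg Prod.fst this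
          exact absurd h0 (by decide)
        | succ n =>
          rw [List.replicate_succ, List.cons_append] at hp
          have := (List.cons_prefix_cons.mp hp).1
          have h0 : false = true := congrArg Prod.snd this
          simp at h0
      obtain ⟨t, ht⟩ := ih _ hpre
      refine ⟨t, ?_⟩
      rw [hgrp]
      rw [fg_cons_no_cancel _ _ ?_]
      · rw [ht, List.replicate_succ, List.cons_append]
      · intro y hy
        rw [ht] at hy
        cases i with
        | zero =>
          simp only [List.replicate_zero, List.nil_append, List.head?_cons,
            Option.some.injEq] at hy
          subst hy
          left; exact (by decide : (1 : Fin 2) ≠ 0)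
        | succ n =>
          rw [List.replicate_succ, List.cons_append, List.head?_cons] at hy
          simp only [Option.some.injEq] at hy
          subst hy
          right; exact (by decide : false ≠ !false)

private lemma fg_prefix_get {i : ℕ} {u : Bool} {L : List ((Fin 2) × Bool)}
    (h : (List.replicate i ((1 : Fin 2), false) ++ [((0 : Fin 2), u)]) <+: L) :
    L[i]? = some ((0 : Fin 2), u) := by
  obtain ⟨s, rfl⟩ := h
  rw [List.append_assoc, List.singleton_append]
  rw [List.getElem?_append_right (by simp)]
  simp

private lemma fg_prefix_get_lt {j : ℕ} {u : Bool} {L : List ((Fin 2) × Bool)} {i : ℕ}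
    (hij : i < j)
    (h : (List.replicate j ((1 : Fin 2), false) ++ [((0 : Fin 2), u)]) <+: L) :
    L[i]? = some ((1 : Fin 2), false) := by
  obtain ⟨s, rfl⟩ := h
  rw [List.append_assoc]
  rw [List.getElem?_append_left (by simpa)]
  simp [hij]

private lemma fg_prefix_unique {i j : ℕ} {u v : Bool} {L : List ((Fin 2) × Bool)}
    (h1 : (List.replicate i ((1 : Fin 2), false) ++ [((0 : Fin 2), u)]) <+: L)
    (h2 : (List.replicate j ((1 : Fin 2), false) ++ [((0 : Fin 2), v)]) <+: L) :
    i = j ∧ u = v := by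
  rcases lt_trichotomy i j with hlt | heq | hgt
  · have e1 := fg_prefix_get h1
    have e2 := fg_prefix_get_lt hlt h2
    rw [e1] at e2
    exact absurd (congrArg (·.map Prod.fst) e2) (by simp)
  · subst heq
    have e1 := fg_prefix_get h1
    have e2 := fg_prefix_get h2
    rw [e1] at e2
    simp only [Option.some.injEq, Prod.mk.injEq] at e2
    exact ⟨rfl, e2.2⟩
  · have e1 := fg_prefix_get h2
    have e2 := fg_prefix_get_lt hgt h1
    rw [e1] at e2
    exact absurd (congrArg (·.map Prod.fst) e2) (by simp)

/-- The homomorphism `FreeGroup ℕ →* FreeGroup (Fin 2)` sending the `i`-th generator to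
`b⁻ⁱ * a * bⁱ` (where `a`, `b` are the two generators) is injective: the free group of
countable rank embeds in `F₂`, so `F₂` is a universal free group. -/
theorem freeGroup_nat_embeds_in_freeGroup_two :
    Function.Injective
      (FreeGroup.lift (fun i : ℕ =>
        ((FreeGroup.of (1 : Fin 2))⁻¹) ^ i * FreeGroup.of (0 : Fin 2) *
          (FreeGroup.of (1 : Fin 2)) ^ i) : FreeGroup ℕ →* FreeGroup (Fin 2)) := by
  set c : ℕ → FreeGroup (Fin 2) := fun i =>
    ((FreeGroup.of (1 : Fin 2))⁻¹) ^ i * FreeGroup.of (0 : Fin 2) *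
      (FreeGroup.of (1 : Fin 2)) ^ i with hc
  have ha : FreeGroup.of (0 : Fin 2) = FreeGroup.mk [((0 : Fin 2), true)] := rfl
  have ha' : (FreeGroup.of (0 : Fin 2))⁻¹ = FreeGroup.mk [((0 : Fin 2), false)] := rfl
  set X : ℕ → Set (FreeGroup (Fin 2)) := fun i =>
    {w | (List.replicate i ((1 : Fin 2), false) ++ [((0 : Fin 2), true)]) <+: w.toWord} with hX
  set Y : ℕ → Set (FreeGroup (Fin 2)) := fun i =>
    {w | (List.replicate i ((1 : Fin 2), false) ++ [((0 : Fin 2), false)]) <+: w.toWord} with hY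
  apply FreeGroup.injective_lift_of_ping_pong c X Y
  · -- nonempty
    intro i
    obtain ⟨t, ht⟩ := fg_key i true 1 (by simp)
    refine ⟨c i, ?_⟩
    have : c i = ((FreeGroup.of (1 : Fin 2))⁻¹) ^ i * FreeGroup.mk [((0 : Fin 2), true)] *
        (FreeGroup.of (1 : Fin 2)) ^ i * 1 := by rw [mul_one, hc, ha]
    show _ <+: (c i).toWord
    rw [this, ht]
    exact ⟨t, by simp⟩
  · -- X pairwise disjoint
    intro i j hij
    rw [Function.onFun, Set.disjoint_left]
    intro w hwi hwj
    exact hij (fg_prefix_unique hwi hwj).1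
  · -- Y pairwise disjoint
    intro i j hij
    rw [Function.onFun, Set.disjoint_left]
    intro w hwi hwj
    exact hij (fg_prefix_unique hwi hwj).1
  · -- X vs Y disjoint
    intro i j
    rw [Set.disjoint_left]
    intro w hwi hwj
    exact absurd (fg_prefix_unique hwi hwj).2 (by simp)
  · -- hX
    intro i x hx
    rw [Set.mem_smul_set] at hx
    obtain ⟨w, hw, rfl⟩ := hx
    have hw' : ¬ (List.replicate i ((1 : Fin 2), false) ++ [((0 : Fin 2), !true)]) <+: w.toWord := hw
    obtain ⟨t, ht⟩ := fg_key i true w hw'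
    show _ <+: (c i • w).toWord
    have : c i • w = ((FreeGroup.of (1 : Fin 2))⁻¹) ^ i * FreeGroup.mk [((0 : Fin 2), true)] *
        (FreeGroup.of (1 : Fin 2)) ^ i * w := by rw [smul_eq_mul, hc, ha]
    rw [this, ht]
    exact ⟨t, by simp⟩
  · -- hY
    intro i x hx
    rw [Set.mem_smul_set] at hx
    obtain ⟨w, hw, rfl⟩ := hx
    have hw' : ¬ (List.replicate i ((1 : Fin 2), false) ++ [((0 : Fin 2), !false)]) <+: w.toWord := hw
    obtain ⟨t, ht⟩ := fg_key i false w hw'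
    show _ <+: ((c⁻¹) i • w).toWord
    have hcinv : (c⁻¹) i = ((FreeGroup.of (1 : Fin 2))⁻¹) ^ i *
        FreeGroup.mk [((0 : Fin 2), false)] * (FreeGroup.of (1 : Fin 2)) ^ i := by
      rw [Pi.inv_apply, hc, ← ha']
      simp [mul_inv_rev, ← inv_pow, mul_assoc]
    have : (c⁻¹) i • w = ((FreeGroup.of (1 : Fin 2))⁻¹) ^ i *
        FreeGroup.mk [((0 : Fin 2), false)] * (FreeGroup.of (1 : Fin 2)) ^ i * w := by
      rw [smul_eq_mul, hcinv]
    rw [this, ht]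
    exact ⟨t, by simp⟩
end

section
/- There is no universal finitely generated nilpotent group: there does not exist a finitely generated nilpotent group G such that every finitely generated nilpotent group H admits an injective group homomorphism into G. -/
/-!
The dihedral group of order `2 ^ (m + 1)` is a `2`-group, hence nilpotent, and since
`⁅r i, sr 0⁆ = r (2 * i)` its `k`-th lower central term contains the rotation `r (2 ^ k)`, which
is nontrivial for `k < m`; so its nilpotency class is at least `m`. An injective homomorphism
cannot raise the nilpotency class, so a universal finitely generated nilpotent group would have
class at least `m` for every `m`.
-/

open scoped commutatorElement

theorem Group.nilpotencyClass_le_of_injective {G H : Type*} [Group G] [Group H]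
    [Group.IsNilpotent G] [Group.IsNilpotent H] (f : H →* G) (hf : Function.Injective f) :
    Group.nilpotencyClass H ≤ Group.nilpotencyClass G := by
  rw [← Subgroup.lowerCentralSeries_eq_bot_iff_nilpotencyClass_le]
  apply Subgroup.map_injective hf
  rw [Subgroup.map_bot, Subgroup.map_lowerCentralSeries, eq_bot_iff,
    ← Subgroup.lowerCentralSeries_nilpotencyClass (G := G)]
  exact Subgroup.lowerCentralSeries_mono _ le_top

namespace DihedralGroup

variable {n : ℕ}

theorem commutatorElement_r_sr (i j : ZMod n) : ⁅r i, sr j⁆ = r (2 * i) := by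
  rw [commutatorElement_def, r_mul_sr, inv_r, sr_mul_r, inv_sr, sr_mul_sr]
  ring_nf

theorem r_two_pow_mem_lowerCentralSeries (k : ℕ) :
    r (2 ^ k : ZMod n) ∈ (⊤ : Subgroup (DihedralGroup n)).lowerCentralSeries k := by
  induction k with
  | zero => exact Subgroup.mem_top _
  | succ k ih =>
    rw [pow_succ', ← commutatorElement_r_sr _ 0, Subgroup.lowerCentralSeries_succ]
    exact Subgroup.commutator_mem_commutator ih (Subgroup.mem_top _)

theorem isNilpotent_two_pow (m : ℕ) : Group.IsNilpotent (DihedralGroup (2 ^ m)) :=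
  have : Fact (Nat.Prime 2) := ⟨Nat.prime_two⟩
  have : NeZero (2 ^ m) := ⟨by positivity⟩
  IsPGroup.isNilpotent (IsPGroup.of_card (n := m + 1) (by rw [nat_card, pow_succ']))

theorem le_nilpotencyClass_two_pow (m : ℕ) [Group.IsNilpotent (DihedralGroup (2 ^ m))] :
    m ≤ Group.nilpotencyClass (DihedralGroup (2 ^ m)) := by
  set c := Group.nilpotencyClass (DihedralGroup (2 ^ m))
  have hmem := r_two_pow_mem_lowerCentralSeries (n := 2 ^ m) c
  rw [Subgroup.lowerCentralSeries_nilpotencyClass, Subgroup.mem_bot, one_def, r.injEq,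
    show (2 : ZMod (2 ^ m)) ^ c = (2 ^ c : ℕ) by push_cast; rfl,
    ZMod.natCast_eq_zero_iff] at hmem
  exact (Nat.pow_dvd_pow_iff_le_right one_lt_two).mp hmem

end DihedralGroup

/-- There is no universal finitely generated nilpotent group: no finitely generated
nilpotent group contains an embedded copy of every finitely generated nilpotent
group. -/
theorem no_universal_finitely_generated_nilpotent_group :
    ¬ ∃ (G : Type) (instG : Group G),
      letI := instG
      Group.FG G ∧ Group.IsNilpotent G ∧
        ∀ (H : Type) [Group H], Group.FG H → Group.IsNilpotent H →
          ∃ φ : H →* G, Function.Injective φ := by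
  rintro ⟨G, instG, -, hG, huniv⟩
  set c := Group.nilpotencyClass G
  have hH := DihedralGroup.isNilpotent_two_pow (c + 1)
  obtain ⟨φ, hφ⟩ := huniv (DihedralGroup (2 ^ (c + 1))) inferInstance hH
  have hclass : c + 1 ≤ c := (DihedralGroup.le_nilpotencyClass_two_pow (c + 1)).trans
    (Group.nilpotencyClass_le_of_injective φ hφ)
  omega
end

section
/- There is a computable function h : ℕ → ℕ such that for every n : ℕ: if W_n is finite then W_{h(n)} = {k : ℕ | k < ncard(W_n)} (in particular W_{h(n)} = ∅ when W_n = ∅), and if W_n is infinite then W_{h(n)} = ℕ. -/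
/-- `WSet e` is the domain of the `e`-th partial recursive function. -/
def WSet (e : ℕ) : Set ℕ :=
  {m : ℕ | ((Denumerable.ofNat Nat.Partrec.Code e).eval m).Dom}

/-!
Enumerate `W_n` in stages: at stage `s` we see the finite set of inputs on which program `n`
halts within `s` steps. Put `k` into `W_{h(n)}` as soon as some stage has more than `k`
elements. Since the stages increase and exhaust `W_n`, this happens iff `k < |W_n|`, read in
`ℕ∞` (so for every `k` when `W_n` is infinite). The relation "some stage of `W_n` has more than
`k` elements" is r.e. in `(n, k)`, so the s-m-n theorem yields a computable `h`.
-/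

theorem Directed.exists_lt_card_iff_lt_encard_iUnion {α ι : Type*} [Nonempty ι]
    {S : ι → Finset α} (hS : Directed (· ⊆ ·) S) (k : ℕ) :
    (∃ i, k < (S i).card) ↔ (k : ℕ∞) < (⋃ i, (S i : Set α)).encard := by
  constructor
  · rintro ⟨i, hi⟩
    calc (k : ℕ∞) < (S i).card := by exact_mod_cast hi
      _ = (S i : Set α).encard := (Set.encard_coe_eq_coe_finsetCard _).symm
      _ ≤ _ := Set.encard_le_encard (Set.subset_iUnion (fun i => (S i : Set α)) i)
  · intro hk
    obtain ⟨t, htU, htk⟩ := Set.exists_subset_encard_eq (Order.add_one_le_of_lt hk)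
    obtain ⟨T, rfl⟩ : ∃ T : Finset α, (T : Set α) = t :=
      Set.Finite.exists_finset_coe (Set.finite_of_encard_eq_coe htk)
    have hS' : Directed (· ⊆ ·) fun i => (S i : Set α) :=
      hS.mono_comp _ fun _ _ => Finset.coe_subset.mpr
    obtain ⟨i, hi⟩ := hS'.exists_mem_subset_of_finset_subset_biUnion htU
    refine ⟨i, ?_⟩
    rw [Set.encard_coe_eq_coe_finsetCard] at htk
    have hT : T.card = k + 1 := by exact_mod_cast htk
    have hTi := Finset.card_le_card (Finset.coe_subset.mp hi)
    omega

theorem PrimrecRel.rePred_exists {α : Type*} [Primcodable α] {R : α → ℕ → Prop}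
    (hR : PrimrecRel R) : REPred fun a => ∃ n, R a n := by
  classical
  refine (Partrec.rfind (p := fun a n => Part.some (decide (R a n)))
    hR.decide.to_comp.partrec₂).dom_re.of_eq fun a => Nat.rfind_dom.trans ?_
  simp

namespace Nat.Partrec.Code

def evalnDom (s : ℕ) (c : Code) : Finset ℕ :=
  (Finset.range s).filter fun m => (evaln s c m).isSome

theorem monotone_evalnDom (c : Code) : Monotone fun s => evalnDom s c := by
  intro s t hst m
  simp only [evalnDom, Finset.mem_filter, Finset.mem_range, Option.isSome_iff_exists]
  rintro ⟨hm, x, hx⟩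
  exact ⟨by omega, x, evaln_mono hst hx⟩

theorem iUnion_evalnDom (c : Code) : ⋃ s, (evalnDom s c : Set ℕ) = {m | (eval c m).Dom} := by
  ext m
  simp only [Set.mem_iUnion, Finset.mem_coe, evalnDom, Finset.mem_filter, Finset.mem_range,
    Option.isSome_iff_exists, Set.mem_ofPred_eq, Part.dom_iff_mem, evaln_complete]
  constructor
  · rintro ⟨s, -, x, hx⟩
    exact ⟨x, s, hx⟩
  · rintro ⟨x, s, hx⟩
    exact ⟨s, evaln_bound hx, x, hx⟩

theorem primrec_card_evalnDom : Primrec fun a : ℕ × Code => (evalnDom a.1 a.2).card := by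
  have halts : PrimrecRel fun (m : ℕ) (a : ℕ × Code) => (evaln a.1 a.2 m).isSome := by
    refine Primrec.primrecPred ?_
    simpa only [Bool.decide_eq_true] using
      Primrec.option_isSome.comp (primrec_evaln.comp (Primrec.snd.pair Primrec.fst))
  refine (Primrec.list_length.comp (halts.listFilter.comp
    (Primrec.list_range.comp Primrec.fst) _root_.Primrec.id)).of_eq fun a => ?_
  simp [evalnDom, Finset.card, Finset.range_val, Multiset.range]

end Nat.Partrec.Code

open Nat.Partrec Nat.Partrec.Code

theorem REPred.exists_computable_wSet_eq {R : ℕ → ℕ → Prop}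
    (hR : REPred fun q : ℕ × ℕ => R q.1 q.2) :
    ∃ h : ℕ → ℕ, Computable h ∧ ∀ n, WSet (h n) = {k | R n k} := by
  have hg : Partrec fun x : ℕ =>
      (Part.assert (R x.unpair.1 x.unpair.2) fun _ => Part.some ()).map fun _ => 0 :=
    (hR.comp Computable.unpair).map (Computable.const 0).to₂
  obtain ⟨c, hc⟩ := exists_code.mp (Partrec.nat_iff.mp hg)
  obtain ⟨f, hf, hfc⟩ := smn
  refine ⟨fun n => Encodable.encode (f c n),
    Computable.encode.comp (hf.comp (Computable.const c) Computable.id), fun n => ?_⟩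
  ext k
  simp only [WSet, Set.mem_ofPred_eq, Denumerable.ofNat_encode, hfc, hc, Part.map_Dom]
  rw [Nat.unpair_pair]
  exact ⟨fun ⟨h, _⟩ => h, fun h => ⟨h, trivial⟩⟩

/-- There is a computable function `h` such that `W_{h(n)}` is the initial segment of `ℕ`
of size `|W_n|` when `W_n` is finite, and is all of `ℕ` when `W_n` is infinite. -/
theorem exists_computable_crush_function :
    ∃ h : ℕ → ℕ, Computable h ∧ ∀ n : ℕ,
      ((WSet n).Finite → WSet (h n) = {k : ℕ | k < (WSet n).ncard}) ∧
      ((WSet n).Infinite → WSet (h n) = Set.univ) := by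
  have hre : REPred fun q : ℕ × ℕ =>
      ∃ s, q.2 < (evalnDom s (Denumerable.ofNat Code q.1)).card :=
    PrimrecRel.rePred_exists <| Primrec.nat_lt.comp
      (Primrec.snd.comp Primrec.fst)
      (primrec_card_evalnDom.comp (Primrec.snd.pair ((Primrec.ofNat Code).comp
        (Primrec.fst.comp Primrec.fst))))
  obtain ⟨h, hh, hW⟩ := REPred.exists_computable_wSet_eq
    (R := fun n k => ∃ s, k < (evalnDom s (Denumerable.ofNat Code n)).card) hre
  have mem_iff : ∀ n k, k ∈ WSet (h n) ↔ (k : ℕ∞) < (WSet n).encard := fun n k => by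
    rw [hW, Set.mem_ofPred_eq,
      (monotone_evalnDom _).directed_le.exists_lt_card_iff_lt_encard_iUnion, iUnion_evalnDom]
    rfl
  refine ⟨h, hh, fun n => ⟨fun hfin => ?_, fun hinf => ?_⟩⟩
  · ext k
    rw [mem_iff, ← hfin.cast_ncard_eq, Set.mem_ofPred_eq, Nat.cast_lt]
  · ext k
    simp [mem_iff, hinf.encard_eq]
end
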